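/- In ℝ² with the sup-norm ‖·‖_∞, let A = {(x,y) : x > 0, y ≥ 1/x} and B = B₁ ∪ B₂ where B₁ = {(x,y) : x > −1, y ≤ 1/(x+1) − 1} and B₂ = {(x,y) : x ≤ −1}. Let Ā = {(x, 1/x) : x > 0} and B̄ = {(x, 1/(x+1) − 1) : x > −1}. Define T : A ∪ B → ℝ² by Tz = (−d(z,Ā)/2, −d(z,Ā)/2) for z ∈ A and Tz = (1 + d(z,B̄)/2, 1 + d(z,B̄)/2) for z ∈ B, where d denotes sup-norm distance from a point to a set. Then T is a cyclic map: T(A) ⊆ B and T(B) ⊆ A. -/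

import Mathlib

open Filter Topology
open scoped Classical

noncomputable section

def Aset : Set (ℝ × ℝ) := {p | 0 < p.1 ∧ 1 / p.1 ≤ p.2}

def B1set : Set (ℝ × ℝ) := {p | -1 < p.1 ∧ p.2 ≤ 1 / (p.1 + 1) - 1}

def B2set : Set (ℝ × ℝ) := {p | p.1 ≤ -1}

def Bset : Set (ℝ × ℝ) := B1set ∪ B2set

/-- The graph Ā = {(x, 1/x) : x > 0}. -/
def AbarSet : Set (ℝ × ℝ) := {p | ∃ x : ℝ, 0 < x ∧ p = (x, 1 / x)}

/-- The graph B̄ = {(x, 1/(x+1) − 1) : x > −1}. -/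
def BbarSet : Set (ℝ × ℝ) := {p | ∃ x : ℝ, -1 < x ∧ p = (x, 1 / (x + 1) - 1)}

/-- The cyclic map T from Example 49. -/
def Tmap (z : ℝ × ℝ) : ℝ × ℝ :=
  if z ∈ Aset then
    (-(Metric.infDist z AbarSet) / 2, -(Metric.infDist z AbarSet) / 2)
  else
    (1 + Metric.infDist z BbarSet / 2, 1 + Metric.infDist z BbarSet / 2)

theorem stmt18 : (∀ z ∈ Aset, Tmap z ∈ Bset) ∧ (∀ z ∈ Bset, Tmap z ∈ Aset) := by
  constructor
  · intro z hz
    have hd : 0 ≤ Metric.infDist z AbarSet := Metric.infDist_nonneg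
    set t : ℝ := Metric.infDist z AbarSet / 2 with ht
    have ht0 : 0 ≤ t := by positivity
    have hT : Tmap z = (-t, -t) := by
      simp only [Tmap, if_pos hz]
      rw [ht]; ring_nf
    rw [hT]
    by_cases hlt : t < 1
    · left
      refine ⟨by simp; linarith, ?_⟩
      show -t ≤ 1 / (-t + 1) - 1
      rw [le_sub_iff_add_le, le_div_iff₀ (by linarith)]
      nlinarith
    · right
      show -t ≤ -1
      linarith [not_lt.mp hlt]
  · intro z hz
    have hzA : z ∉ Aset := by
      rcases hz with h1 | h2
      · rintro ⟨hx, hy⟩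
        have hx1 : (0:ℝ) < z.1 + 1 := by linarith
        have h3 : 1 / (z.1 + 1) ≤ 1 := by
          rw [div_le_one hx1]; linarith
        have h4 : 0 < 1 / z.1 := by positivity
        have := h1.2
        linarith
      · rintro ⟨hx, _⟩
        have : z.1 ≤ -1 := h2
        linarith
    have hd : 0 ≤ Metric.infDist z BbarSet := Metric.infDist_nonneg
    set s : ℝ := Metric.infDist z BbarSet / 2 with hs
    have hs0 : 0 ≤ s := by positivity
    have hT : Tmap z = (1 + s, 1 + s) := by
      simp only [Tmap, if_neg hzA]
      rw [hs]
    rw [hT]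
    refine ⟨by simp; linarith, ?_⟩
    show 1 / (1 + s) ≤ 1 + s
    rw [div_le_iff₀ (by linarith)]
    nlinarith

end
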